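/- For β ∈ (0, π/2], define B_β = (π − 2β)/4 + (1/3)tan³(β/2) + tan(β/2) and C_β = (2 sin β + sin 2β)·B_β. Then C_{π/2} = 8/3; 0 < C_β < 4 for every β ∈ (0, π/2]; and C_β → 0 as β → 0⁺. -/

import Mathlib

open Filter Real

noncomputable section

/-- The constant `B_β = (π − 2β)/4 + (1/3)tan³(β/2) + tan(β/2)`. -/
def Bconst (β : ℝ) : ℝ :=
  (Real.pi - 2 * β) / 4 + (1 / 3) * Real.tan (β / 2) ^ 3 + Real.tan (β / 2)

/-- The drift coefficient `C_β = (2 sin β + sin 2β)·B_β` of the sawtooth approximation. -/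
def Cconst (β : ℝ) : ℝ := (2 * Real.sin β + Real.sin (2 * β)) * Bconst β

lemma cos_half_pos {x : ℝ} (h0 : 0 ≤ x) (h1 : x ≤ π / 2) : 0 < Real.cos (x / 2) := by
  apply Real.cos_pos_of_mem_Ioo
  constructor <;> nlinarith [Real.pi_pos]

lemma hasDerivAt_B {x : ℝ} (h0 : 0 ≤ x) (h1 : x ≤ π / 2) :
    HasDerivAt Bconst (-1/2 + 1 / (2 * Real.cos (x / 2) ^ 4)) x := by
  have hc : Real.cos (x / 2) ≠ 0 := (cos_half_pos h0 h1).ne'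
  have ht : HasDerivAt (fun y : ℝ => Real.tan (y / 2))
      (1 / Real.cos (x / 2) ^ 2 * (1 / 2)) x := by
    have := (Real.hasDerivAt_tan hc).comp x ((hasDerivAt_id x).div_const 2)
    simpa [Function.comp_def] using this
  have h3 : HasDerivAt (fun y : ℝ => Real.tan (y / 2) ^ 3)
      (3 * Real.tan (x / 2) ^ 2 * (1 / Real.cos (x / 2) ^ 2 * (1 / 2))) x := by
    simpa [Pi.pow_def] using ht.pow 3
  have hlin : HasDerivAt (fun y : ℝ => (Real.pi - 2 * y) / 4) (-1/2) x := by
    have : HasDerivAt (fun y : ℝ => (Real.pi - 2 * y) / 4) ((0 - 2 * 1) / 4) x :=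
      (((hasDerivAt_const x Real.pi).sub ((hasDerivAt_id x).const_mul 2)).div_const 4)
    norm_num at this
    convert this using 1
    norm_num
  have : HasDerivAt Bconst _ x := (hlin.add (h3.const_mul (1/3 : ℝ))).add ht
  convert this using 1
  have htan : Real.tan (x / 2) = Real.sin (x / 2) / Real.cos (x / 2) := Real.tan_eq_sin_div_cos _
  have hsc : Real.sin (x / 2) ^ 2 = 1 - Real.cos (x / 2) ^ 2 := by
    nlinarith [Real.sin_sq_add_cos_sq (x / 2)]
  field_simp [htan]
  have htc : Real.cos (x / 2) ^ 2 * Real.tan (x / 2) ^ 2 = 1 - Real.cos (x / 2) ^ 2 := by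
    rw [htan, div_pow, mul_div_cancel₀ _ (pow_ne_zero 2 hc)]; exact hsc
  linear_combination (-1) * htc

lemma B_strictMono : StrictMonoOn Bconst (Set.Icc 0 (π / 2)) := by
  apply strictMonoOn_of_deriv_pos (convex_Icc _ _)
  · intro x hx
    exact (hasDerivAt_B hx.1 hx.2).continuousAt.continuousWithinAt
  · intro x hx
    rw [interior_Icc] at hx
    rw [(hasDerivAt_B hx.1.le hx.2.le).deriv]
    have hc0 : 0 < Real.cos (x / 2) := cos_half_pos hx.1.le hx.2.le
    have hc1 : Real.cos (x / 2) < 1 := by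
      have := Real.strictAntiOn_cos (show (0:ℝ) ∈ Set.Icc 0 π from ⟨le_refl 0, Real.pi_pos.le⟩)
        (show x / 2 ∈ Set.Icc 0 π from ⟨by linarith [hx.1], by nlinarith [Real.pi_pos, hx.2]⟩)
        (by linarith [hx.1])
      simpa using this
    have h4 : Real.cos (x / 2) ^ 4 < 1 := by
      have := pow_lt_pow_left₀ hc1 hc0.le (n := 4) (by norm_num)
      simpa using this
    have h4' : 0 < Real.cos (x / 2) ^ 4 := by positivity
    have : (1 : ℝ) / 2 < 1 / (2 * Real.cos (x / 2) ^ 4) := by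
      rw [div_lt_div_iff₀ (by norm_num) (by positivity)]
      nlinarith
    linarith

lemma B_le (β : ℝ) (h0 : 0 < β) (h1 : β ≤ π / 2) : Bconst β ≤ 4 / 3 := by
  have hend : Bconst (π / 2) = 4 / 3 := by
    have : Real.tan (π / 2 / 2) = 1 := by
      rw [show π / 2 / 2 = π / 4 by ring, Real.tan_pi_div_four]
    simp only [Bconst, this]
    ring
  rcases eq_or_lt_of_le h1 with h | h
  · rw [h, hend]
  · have := B_strictMono (Set.mem_Icc.2 ⟨h0.le, h1⟩)
      (Set.mem_Icc.2 ⟨by positivity, le_refl _⟩) h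
    linarith [hend ▸ this]

lemma B_pos (β : ℝ) (h0 : 0 < β) (h1 : β ≤ π / 2) : 0 < Bconst β := by
  have ht : 0 < Real.tan (β / 2) := by
    apply Real.tan_pos_of_pos_of_lt_pi_div_two (by positivity)
    nlinarith [Real.pi_pos]
  have : 0 ≤ (π - 2 * β) / 4 := by linarith
  have := pow_pos ht 3
  unfold Bconst; nlinarith

lemma sin_factor (β : ℝ) :
    2 * Real.sin β + Real.sin (2 * β) =
      8 * Real.sin (β / 2) * Real.cos (β / 2) ^ 3 := by
  have h1 : Real.sin β = 2 * Real.sin (β / 2) * Real.cos (β / 2) := by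
    rw [show β = 2 * (β / 2) by ring, Real.sin_two_mul]; ring_nf
  have h2 : Real.sin (2 * β) = 2 * Real.sin β * Real.cos β := Real.sin_two_mul β
  have h3 : Real.cos β = 2 * Real.cos (β / 2) ^ 2 - 1 := by
    rw [show β = 2 * (β / 2) by ring, Real.cos_two_mul]; ring_nf
  rw [h2, h1, h3]; ring

theorem stmt8 :
    Cconst (Real.pi / 2) = 8 / 3 ∧
    (∀ β ∈ Set.Ioc (0 : ℝ) (Real.pi / 2), 0 < Cconst β ∧ Cconst β < 4) ∧
    Tendsto Cconst (nhdsWithin 0 (Set.Ioi 0)) (nhds 0) := by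
  refine ⟨?_, ?_, ?_⟩
  · have h1 : Real.sin (π / 2) = 1 := Real.sin_pi_div_two
    have h2 : Real.sin (2 * (π / 2)) = 0 := by
      rw [show 2 * (π / 2) = π by ring, Real.sin_pi]
    have h3 : Bconst (π / 2) = 4 / 3 := by
      have : Real.tan (π / 2 / 2) = 1 := by
        rw [show π / 2 / 2 = π / 4 by ring, Real.tan_pi_div_four]
      simp only [Bconst, this]; ring
    rw [Cconst, h1, h2, h3]; ring
  · rintro β ⟨h0, h1⟩
    have hBpos := B_pos β h0 h1
    have hBle := B_le β h0 h1
    set s := Real.sin (β / 2)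
    set c := Real.cos (β / 2)
    have hs : 0 < s := by
      apply Real.sin_pos_of_pos_of_lt_pi (by positivity)
      nlinarith [Real.pi_pos]
    have hc : 0 < c := cos_half_pos h0.le h1
    have hsc : s ^ 2 + c ^ 2 = 1 := Real.sin_sq_add_cos_sq _
    have hfac := sin_factor β
    have hflt : 8 * s * c ^ 3 < 3 := by nlinarith [sq_nonneg (c^2 - 3/4), sq_nonneg (s*c - 1/2), sq_nonneg (s - c), sq_nonneg (s*c^3), sq_nonneg (2*s*c - 1)]
    have hfpos : 0 < 8 * s * c ^ 3 := by positivity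
    constructor
    · rw [Cconst, hfac]; positivity
    · rw [Cconst, hfac]
      calc 8 * s * c ^ 3 * Bconst β ≤ 8 * s * c ^ 3 * (4 / 3) := by nlinarith
        _ < 3 * (4 / 3) := by nlinarith
        _ = 4 := by norm_num
  · have hcont : ContinuousAt Cconst 0 := by
      apply ContinuousAt.mul
      · exact ((Real.continuous_sin.continuousAt.const_mul 2).add
          (Real.continuous_sin.continuousAt.comp (by fun_prop)))
      · unfold Bconst
        have ht : ContinuousAt (fun y : ℝ => Real.tan (y / 2)) 0 := by
          have hd := (Real.hasDerivAt_tan (show Real.cos ((0:ℝ) / 2) ≠ 0 by norm_num)).comp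
            (0 : ℝ) ((hasDerivAt_id (0 : ℝ)).div_const 2)
          exact hd.continuousAt
        exact (((continuousAt_const.sub (continuousAt_id.const_mul 2)).div_const 4).add
          ((ht.pow 3).const_mul (1/3))).add ht
    have h0 : Cconst 0 = 0 := by
      simp [Cconst, Bconst]
    have := hcont.continuousWithinAt (s := Set.Ioi 0)
    rw [ContinuousWithinAt, h0] at this
    exact this
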